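/- arXiv:1808.09734 — 5 statements merged into one kernel-verified Lean document; each statement's English description precedes it below -/
import Mathlib

section
/- Let S be a nonempty subset of the Euclidean plane ℝ² and let f : S → ℝ² be 1-Lipschitz, i.e. ‖f(x) − f(y)‖ ≤ ‖x − y‖ for all x, y ∈ S. Then for every set T with S ⊆ T ⊆ ℝ² there exists a map F : T → ℝ² such that F agrees with f on S, F is 1-Lipschitz on T, and the image F(T) is contained in the closure of the convex hull of f(S). -/
/-!
Compose a 1-Lipschitz extension `g : ℝ² → ℝ²` of `f` (Kirszbraun) with the nearest-point
retraction onto the closed convex hull of `f '' S`, which is 1-Lipschitz and fixes `f '' S`.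

For Kirszbraun, Zorn's lemma on 1-Lipschitz graphs reduces everything to adding one point `p`,
i.e. to showing that the balls `B(y i, ‖p - x i‖)` have a common point, and by compactness of
balls it is enough to do so for finitely many. Let `c` be the least scale at which the balls
`B(y i, c ‖p - x i‖)` meet, at `v`. Then `v` lies in the convex hull of the `y i` on whose
spheres it sits (otherwise moving `v` towards that hull would lower `c`). Writing
`v = ∑ w i • y i`, the identity `∑ w i w j ‖y i - y j‖² = 2 ∑ w i ‖y i - v‖²` and its
counterpart for the `x i` give `c² ≤ 1`.
-/

open Filter Metric Set Topology
open scoped RealInnerProductSpace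

section Projection

variable {F : Type*} [NormedAddCommGroup F] [InnerProductSpace ℝ F]

theorem norm_sub_le_of_inner_sub_nonpos {u u' v v' : F} (h : ⟪u - v, v' - v⟫ ≤ 0)
    (h' : ⟪u' - v', v - v'⟫ ≤ 0) : ‖v - v'‖ ≤ ‖u - u'‖ := by
  have hsq : ‖v - v'‖ ^ 2 ≤ ⟪u - u', v - v'⟫ := by
    have : ⟪u - u', v - v'⟫ = ‖v - v'‖ ^ 2 - ⟪u - v, v' - v⟫ - ⟪u' - v', v - v'⟫ := by
      rw [← real_inner_self_eq_norm_sq, ← neg_sub v v', inner_neg_right,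
        show u - u' = (u - v) - (u' - v') + (v - v') by abel, inner_add_left, inner_sub_left]
      ring
    linarith
  rcases (norm_nonneg (v - v')).eq_or_lt with h0 | hpos
  · rw [← h0]; exact norm_nonneg _
  · nlinarith [real_inner_le_norm (u - u') (v - v')]

theorem IsComplete.exists_inner_sub_nonpos {C : Set F} (hc : IsComplete C) (hC : Convex ℝ C)
    (hne : C.Nonempty) (u : F) : ∃ v ∈ C, ∀ w ∈ C, ⟪u - v, w - v⟫ ≤ 0 := by
  obtain ⟨v, hvC, hv⟩ := exists_norm_eq_iInf_of_complete_convex hne hc hC u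
  exact ⟨v, hvC, (norm_eq_iInf_iff_real_inner_le_zero hC hvC).1 hv⟩

theorem IsComplete.exists_inner_pos_of_notMem {C : Set F} (hc : IsComplete C) (hC : Convex ℝ C)
    {u : F} (hu : u ∉ C) : ∃ d : F, ∀ w ∈ C, 0 < ⟪d, w - u⟫ := by
  rcases C.eq_empty_or_nonempty with rfl | hne
  · exact ⟨0, fun w hw => hw.elim⟩
  obtain ⟨v, hvC, hv⟩ := hc.exists_inner_sub_nonpos hC hne u
  have hvu : 0 < ‖v - u‖ := norm_pos_iff.2 (sub_ne_zero.2 (ne_of_mem_of_not_mem hvC hu))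
  refine ⟨v - u, fun w hw => ?_⟩
  have hexp : ⟪v - u, w - u⟫ = ‖v - u‖ ^ 2 - ⟪u - v, w - v⟫ := by
    rw [← real_inner_self_eq_norm_sq, show w - u = (w - v) + (v - u) by abel, inner_add_right,
      ← neg_sub u v]
    simp only [inner_neg_left, inner_neg_right, neg_neg]
    ring
  nlinarith [hv w hw]

theorem IsComplete.exists_lipschitzWith_retraction {C : Set F} (hc : IsComplete C)
    (hC : Convex ℝ C) (hne : C.Nonempty) :
    ∃ π : F → F, LipschitzWith 1 π ∧ range π ⊆ C ∧ EqOn π id C := by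
  choose π hπC hπ using hc.exists_inner_sub_nonpos hC hne
  refine ⟨π, lipschitzWith_iff_norm_sub_le.2 fun u u' => ?_, range_subset_iff.2 hπC,
    fun u hu => ?_⟩
  · rw [NNReal.coe_one, one_mul]
    exact norm_sub_le_of_inner_sub_nonpos (hπ u _ (hπC u')) (hπ u' _ (hπC u))
  · have := hπ u u hu
    rw [real_inner_self_nonpos, sub_eq_zero] at this
    exact this.symm

end Projection

theorem exists_min_scale_forall_dist_le {X ι : Type*} [PseudoMetricSpace X] [ProperSpace X]
    [Nonempty X] [Finite ι] [Nonempty ι] (y : ι → X) {a : ι → ℝ} (ha : ∀ i, 0 < a i) :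
    ∃ v : X, ∃ c : ℝ, (∀ i, dist v (y i) ≤ c * a i) ∧ ¬∃ u, ∀ i, dist u (y i) < c * a i := by
  have := Fintype.ofFinite ι
  let φ : X → ℝ := fun v => Finset.univ.sup' Finset.univ_nonempty fun i => dist v (y i) / a i
  have hφ_ge (v : X) (i : ι) : dist v (y i) / a i ≤ φ v :=
    Finset.le_sup' (fun i => dist v (y i) / a i) (Finset.mem_univ i)
  have hφ : Continuous φ :=
    Continuous.finset_sup'_apply Finset.univ_nonempty fun i _ => by fun_prop
  obtain ⟨i₀⟩ := ‹Nonempty ι›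
  have hcoercive : Tendsto φ (cocompact X) atTop := by
    refine tendsto_atTop_mono (hφ_ge · i₀) ?_
    exact (tendsto_dist_right_cocompact_atTop (y i₀)).atTop_div_const (ha i₀)
  obtain ⟨v, hv⟩ := hφ.exists_forall_le hcoercive
  refine ⟨v, φ v, fun i => (div_le_iff₀ (ha i)).1 (hφ_ge v i), fun ⟨u, hu⟩ => ?_⟩
  exact (hv u).not_gt ((Finset.sup'_lt_iff _).2 fun i _ => (div_lt_iff₀ (ha i)).2 (hu i))

section Kirszbraun

variable {E F : Type*} [NormedAddCommGroup E] [InnerProductSpace ℝ E]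
  [NormedAddCommGroup F] [InnerProductSpace ℝ F]

theorem sum_sum_mul_norm_sub_sq {ι : Type*} (s : Finset ι) (w : ι → ℝ) (z : ι → E) (c : E) :
    ∑ i ∈ s, ∑ j ∈ s, w i * w j * ‖z i - z j‖ ^ 2 =
      2 * (∑ i ∈ s, w i) * ∑ i ∈ s, w i * ‖z i - c‖ ^ 2
        - 2 * ‖∑ i ∈ s, w i • (z i - c)‖ ^ 2 := by
  have hz : ∀ i j, ‖z i - z j‖ ^ 2 = ‖z i - c‖ ^ 2 - 2 * ⟪z i - c, z j - c⟫ + ‖z j - c‖ ^ 2 := by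
    intro i j
    rw [← norm_sub_sq_real, sub_sub_sub_cancel_right]
  have hsum : ‖∑ i ∈ s, w i • (z i - c)‖ ^ 2
      = ∑ i ∈ s, ∑ j ∈ s, w i * w j * ⟪z i - c, z j - c⟫ := by
    simp_rw [← real_inner_self_eq_norm_sq, sum_inner, inner_sum, real_inner_smul_left,
      real_inner_smul_right, mul_assoc]
  calc ∑ i ∈ s, ∑ j ∈ s, w i * w j * ‖z i - z j‖ ^ 2
      = ∑ i ∈ s, ∑ j ∈ s, (w i * ‖z i - c‖ ^ 2 * w j + w i * (w j * ‖z j - c‖ ^ 2)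
          - 2 * (w i * w j * ⟪z i - c, z j - c⟫)) := by
        refine Finset.sum_congr rfl fun i _ => Finset.sum_congr rfl fun j _ => ?_
        rw [hz]
        ring
    _ = _ := by
        simp only [Finset.sum_add_distrib, Finset.sum_sub_distrib, ← Finset.mul_sum,
          ← Finset.sum_mul, hsum]
        ring

theorem sum_mul_norm_sub_sq_le {ι : Type*} {s : Finset ι} {w : ι → ℝ} {x : ι → E} {y : ι → F}
    {v : F} (hw₀ : ∀ i ∈ s, 0 ≤ w i) (hw₁ : ∑ i ∈ s, w i = 1) (hv : ∑ i ∈ s, w i • y i = v)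
    (hxy : ∀ i ∈ s, ∀ j ∈ s, ‖y i - y j‖ ≤ ‖x i - x j‖) (p : E) :
    ∑ i ∈ s, w i * ‖y i - v‖ ^ 2 ≤ ∑ i ∈ s, w i * ‖x i - p‖ ^ 2 := by
  have hbary : ∑ i ∈ s, w i • (y i - v) = 0 := by
    simp only [smul_sub, Finset.sum_sub_distrib, ← Finset.sum_smul, hw₁, one_smul, hv, sub_self]
  have hpairs : ∑ i ∈ s, ∑ j ∈ s, w i * w j * ‖y i - y j‖ ^ 2
      ≤ ∑ i ∈ s, ∑ j ∈ s, w i * w j * ‖x i - x j‖ ^ 2 :=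
    Finset.sum_le_sum fun i hi => Finset.sum_le_sum fun j hj =>
      mul_le_mul_of_nonneg_left (pow_le_pow_left₀ (norm_nonneg _) (hxy i hi j hj) 2)
        (mul_nonneg (hw₀ i hi) (hw₀ j hj))
  rw [sum_sum_mul_norm_sub_sq s w y v, sum_sum_mul_norm_sub_sq s w x p, hbary, hw₁,
    norm_zero] at hpairs
  nlinarith [sq_nonneg ‖∑ i ∈ s, w i • (x i - p)‖]

theorem eventually_norm_add_smul_sub_lt {u d q : F} (h : 0 < ⟪d, q - u⟫) :
    ∀ᶠ t in 𝓝[>] (0 : ℝ), ‖u + t • d - q‖ < ‖u - q‖ := by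
  have hsmall : ∀ᶠ t in 𝓝 (0 : ℝ), t * ‖d‖ ^ 2 < 2 * ⟪d, q - u⟫ :=
    (continuous_id.mul continuous_const).tendsto' 0 0 (zero_mul _) |>.eventually
      (gt_mem_nhds (by linarith))
  filter_upwards [nhdsWithin_le_nhds hsmall, self_mem_nhdsWithin] with t ht (htpos : 0 < t)
  have hexp : ‖u + t • d - q‖ ^ 2 = ‖u - q‖ ^ 2 - t * (2 * ⟪d, q - u⟫ - t * ‖d‖ ^ 2) := by
    rw [show u + t • d - q = (u - q) + t • d by abel, norm_add_sq_real, norm_smul,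
      real_inner_smul_right, real_inner_comm, ← neg_sub q u, inner_neg_right, Real.norm_eq_abs,
      mul_pow, sq_abs]
    ring
  refine lt_of_pow_lt_pow_left₀ 2 (norm_nonneg _) ?_
  rw [hexp]
  nlinarith

theorem mem_convexHull_of_forall_norm_sub_le {ι : Type*} [Finite ι] {y : ι → F} {r : ι → ℝ}
    {v : F} (hv : ∀ i, ‖v - y i‖ ≤ r i) (hmin : ¬∃ u, ∀ i, ‖u - y i‖ < r i) :
    v ∈ convexHull ℝ (y '' {i | ‖v - y i‖ = r i}) := by
  by_contra hout
  have hcomplete : IsComplete (convexHull ℝ (y '' {i | ‖v - y i‖ = r i})) :=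
    ((toFinite _).image y).isCompact_convexHull ℝ |>.isComplete
  obtain ⟨d, hd⟩ := hcomplete.exists_inner_pos_of_notMem (convex_convexHull ℝ _) hout
  have hmove : ∀ i, ∀ᶠ t in 𝓝[>] (0 : ℝ), ‖v + t • d - y i‖ < r i := by
    intro i
    rcases (hv i).eq_or_lt with hi | hi
    · rw [← hi]
      exact eventually_norm_add_smul_sub_lt (hd _ (subset_convexHull ℝ _ ⟨i, hi, rfl⟩))
    · have hcont : Continuous fun t : ℝ => ‖v + t • d - y i‖ := by fun_prop
      exact nhdsWithin_le_nhds <| hcont.tendsto' 0 _ (by simp) |>.eventually (gt_mem_nhds hi)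
  obtain ⟨t, ht⟩ := (eventually_all.2 hmove).exists
  exact hmin ⟨_, ht⟩

theorem exists_forall_norm_sub_le_of_finite [ProperSpace F] {ι : Type*} [Finite ι] (x : ι → E)
    (y : ι → F) (hxy : ∀ i j, ‖y i - y j‖ ≤ ‖x i - x j‖) (p : E) :
    ∃ v : F, ∀ i, ‖v - y i‖ ≤ ‖p - x i‖ := by
  rcases isEmpty_or_nonempty ι with hι | hι
  · exact ⟨0, isEmptyElim⟩
  by_cases hp : ∃ i, p = x i
  · obtain ⟨i, rfl⟩ := hp
    exact ⟨y i, fun j => hxy i j⟩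
  push Not at hp
  have ha : ∀ i, 0 < ‖p - x i‖ := fun i => norm_pos_iff.2 (sub_ne_zero.2 (hp i))
  obtain ⟨v, c, hv, hmin⟩ := exists_min_scale_forall_dist_le y ha
  simp only [dist_eq_norm] at hv hmin
  suffices hc : c ≤ 1 from ⟨v, fun i => (hv i).trans (mul_le_of_le_one_left (ha i).le hc)⟩
  have hhull := mem_convexHull_of_forall_norm_sub_le hv hmin
  rw [image_eq_range, convexHull_range_eq_exists_affineCombination] at hhull
  obtain ⟨s, w, hw₀, hw₁, hwv⟩ := hhull
  rw [Finset.affineCombination_eq_linear_combination _ _ _ hw₁] at hwv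
  have hvar := sum_mul_norm_sub_sq_le hw₀ hw₁ hwv (fun i _ j _ => hxy i j) p
  have hactive : ∀ i ∈ s, w i * ‖y i - v‖ ^ 2 = c ^ 2 * (w i * ‖x i - p‖ ^ 2) := by
    intro i _
    rw [norm_sub_rev, i.2, norm_sub_rev p]
    ring
  rw [Finset.sum_congr rfl hactive, ← Finset.mul_sum] at hvar
  obtain ⟨i, hi, hwi⟩ := Finset.exists_ne_zero_of_sum_ne_zero (hw₁.trans_ne one_ne_zero)
  have hpos : 0 < ∑ i ∈ s, w i * ‖x i - p‖ ^ 2 := by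
    refine Finset.sum_pos' (fun j hj => mul_nonneg (hw₀ j hj) (sq_nonneg _)) ⟨i, hi, ?_⟩
    rw [norm_sub_rev]
    exact mul_pos ((hw₀ i hi).lt_of_ne' hwi) (pow_pos (ha i) 2)
  exact le_of_abs_le ((sq_le_one_iff_abs_le_one c).1 ((mul_le_iff_le_one_left hpos).1 hvar))

theorem exists_forall_norm_sub_le [ProperSpace F] {ι : Type*} (x : ι → E) (y : ι → F)
    (hxy : ∀ i j, ‖y i - y j‖ ≤ ‖x i - x j‖) (p : E) :
    ∃ v : F, ∀ i, ‖v - y i‖ ≤ ‖p - x i‖ := by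
  classical
  rcases isEmpty_or_nonempty ι with hι | ⟨⟨i₀⟩⟩
  · exact ⟨0, isEmptyElim⟩
  have hballs : (closedBall (y i₀) ‖p - x i₀‖ ∩ ⋂ i, closedBall (y i) ‖p - x i‖).Nonempty := by
    refine (isCompact_closedBall _ _).inter_iInter_nonempty _ (fun _ => isClosed_closedBall)
      fun u => ?_
    obtain ⟨v, hv⟩ := exists_forall_norm_sub_le_of_finite (fun i : ↥(insert i₀ u) => x i)
      (fun i => y i) (fun i j => hxy i j) p
    refine ⟨v, ?_, mem_iInter₂.2 fun i hi => ?_⟩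
    · simpa [dist_eq_norm] using hv ⟨i₀, Finset.mem_insert_self _ _⟩
    · simpa [dist_eq_norm] using hv ⟨i, Finset.mem_insert_of_mem hi⟩
  obtain ⟨v, -, hv⟩ := hballs
  exact ⟨v, fun i => by simpa [dist_eq_norm] using mem_iInter.1 hv i⟩

theorem LipschitzOnWith.kirszbraun [ProperSpace F] {s : Set E} {f : E → F}
    (hf : LipschitzOnWith 1 f s) : ∃ g : E → F, LipschitzWith 1 g ∧ EqOn f g s := by
  let 𝒢 : Set (Set (E × F)) :=
    {G | (∀ x ∈ s, (x, f x) ∈ G) ∧ ∀ a ∈ G, ∀ b ∈ G, ‖a.2 - b.2‖ ≤ ‖a.1 - b.1‖}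
  have hchain : ∀ c ⊆ 𝒢, IsChain (· ⊆ ·) c → c.Nonempty → ∃ ub ∈ 𝒢, ∀ G ∈ c, G ⊆ ub := by
    rintro c hc𝒢 hc ⟨G₀, hG₀⟩
    refine ⟨⋃₀ c, ⟨fun x hx => mem_sUnion_of_mem ((hc𝒢 hG₀).1 x hx) hG₀, ?_⟩,
      fun G hG => subset_sUnion_of_mem hG⟩
    rintro a ⟨Ga, hGa, ha⟩ b ⟨Gb, hGb, hb⟩
    rcases hc.total hGa hGb with h | h
    · exact (hc𝒢 hGb).2 a (h ha) b hb
    · exact (hc𝒢 hGa).2 a ha b (h hb)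
  have hgraph : {a : E × F | a.1 ∈ s ∧ a.2 = f a.1} ∈ 𝒢 := by
    refine ⟨fun x hx => ⟨hx, rfl⟩, ?_⟩
    rintro ⟨x, _⟩ ⟨hx, hfx⟩ ⟨y, _⟩ ⟨hy, hfy⟩
    dsimp only at hx hfx hy hfy ⊢
    simpa [hfx, hfy] using lipschitzOnWith_iff_norm_sub_le.1 hf hx hy
  obtain ⟨G, -, ⟨hGs, hG⟩, hGmax⟩ := zorn_subset_nonempty 𝒢 hchain _ hgraph
  have hfun {x : E} {y y' : F} (hy : (x, y) ∈ G) (hy' : (x, y') ∈ G) : y = y' := by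
    simpa [sub_eq_zero] using hG _ hy _ hy'
  have htotal (p : E) : ∃ q, (p, q) ∈ G := by
    obtain ⟨v, hv⟩ := exists_forall_norm_sub_le (fun a : G => a.1.1) (fun a => a.1.2)
      (fun a b => hG _ a.2 _ b.2) p
    refine ⟨v, hGmax ⟨fun x hx => mem_insert_of_mem _ (hGs x hx), ?_⟩ (subset_insert _ _)
      (mem_insert _ _)⟩
    rintro a (rfl | ha) b (rfl | hb)
    · simp
    · exact hv ⟨b, hb⟩
    · rw [norm_sub_rev, norm_sub_rev a.1]
      exact hv ⟨a, ha⟩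
    · exact hG a ha b hb
  choose g hg using htotal
  exact ⟨g, lipschitzWith_iff_norm_sub_le.2 fun x y => by simpa using hG _ (hg x) _ (hg y),
    fun x hx => hfun (hGs x hx) (hg x)⟩

end Kirszbraun

theorem kirszbraun_valentine_plane_general
    (S : Set (EuclideanSpace ℝ (Fin 2))) (hS : S.Nonempty)
    (f : EuclideanSpace ℝ (Fin 2) → EuclideanSpace ℝ (Fin 2))
    (hf : ∀ x ∈ S, ∀ y ∈ S, ‖f x - f y‖ ≤ ‖x - y‖)
    (T : Set (EuclideanSpace ℝ (Fin 2))) :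
    ∃ F : EuclideanSpace ℝ (Fin 2) → EuclideanSpace ℝ (Fin 2),
      (∀ x ∈ S, F x = f x) ∧
      (∀ x ∈ T, ∀ y ∈ T, ‖F x - F y‖ ≤ ‖x - y‖) ∧
      (∀ x ∈ T, F x ∈ closure (convexHull ℝ (f '' S))) := by
  have hf' : LipschitzOnWith 1 f S :=
    lipschitzOnWith_iff_norm_sub_le.2 fun x hx y hy => by simpa using hf x hx y hy
  obtain ⟨g, hg, hfg⟩ := hf'.kirszbraun
  have hfC : ∀ x ∈ S, f x ∈ closure (convexHull ℝ (f '' S)) := fun x hx =>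
    subset_closure (subset_convexHull ℝ _ (mem_image_of_mem f hx))
  obtain ⟨x₀, hx₀⟩ := hS
  obtain ⟨π, hπ, hπC, hπid⟩ := isClosed_closure.isComplete.exists_lipschitzWith_retraction
    (convex_convexHull ℝ _).closure ⟨f x₀, hfC x₀ hx₀⟩
  refine ⟨π ∘ g, fun x hx => ?_, fun x _ y _ => ?_, fun x _ => hπC (mem_range_self _)⟩
  · simp [← hfg hx, hπid (hfC x hx)]
  · simpa [dist_eq_norm] using (hπ.comp hg).dist_le_mul x y

/-- Kirszbraun–Valentine extension theorem in the plane (Theorem 1.4 of the paper):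
a 1-Lipschitz map defined on a nonempty subset `S` of `ℝ²` extends to any superset `T`
as a 1-Lipschitz map whose image lies in the closure of the convex hull of `f '' S`. -/
theorem kirszbraun_valentine_plane
    (S : Set (EuclideanSpace ℝ (Fin 2))) (hS : S.Nonempty)
    (f : EuclideanSpace ℝ (Fin 2) → EuclideanSpace ℝ (Fin 2))
    (hf : ∀ x ∈ S, ∀ y ∈ S, ‖f x - f y‖ ≤ ‖x - y‖)
    (T : Set (EuclideanSpace ℝ (Fin 2))) (hST : S ⊆ T) :
    ∃ F : EuclideanSpace ℝ (Fin 2) → EuclideanSpace ℝ (Fin 2),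
      (∀ x ∈ S, F x = f x) ∧
      (∀ x ∈ T, ∀ y ∈ T, ‖F x - F y‖ ≤ ‖x - y‖) ∧
      (∀ x ∈ T, F x ∈ closure (convexHull ℝ (f '' S))) :=
  kirszbraun_valentine_plane_general S hS f hf T
end

section
/- Let S be a nonempty subset of the Euclidean plane ℝ², let f : S → ℝ² satisfy ‖f(x) − f(y)‖ ≤ ‖x − y‖ for all x, y ∈ S, and let p ∈ ℝ². Then there exists a point p' lying in the closure of the convex hull of the image f(S) such that ‖p' − f(x)‖ ≤ ‖p − x‖ for every x ∈ S. -/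
/-!
For finitely many points, minimise `q ↦ max_x (‖q - f x‖² - ‖p - x‖²)` over the convex hull of
the images, with minimum `m` at `q₀`. Then `q₀` lies in the convex hull of the images of the
active points (otherwise moving towards the nearest point of that hull lowers the maximum), say
`q₀ = ∑ wᵢ • f xᵢ`. Expanding `0 = ‖∑ wᵢ • (q₀ - f xᵢ)‖²` and using
`‖f xᵢ - f xⱼ‖ ≤ ‖xᵢ - xⱼ‖` gives `0 ≥ m + ‖∑ wᵢ • (p - xᵢ)‖²`, so `m ≤ 0`. Arbitrary sets follow
by compactness of closed balls in a finite-dimensional target.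
-/

open Finset Metric Filter Topology
open scoped RealInnerProductSpace

variable {E F : Type*} [NormedAddCommGroup E] [InnerProductSpace ℝ E]
  [NormedAddCommGroup F] [InnerProductSpace ℝ F]

theorem norm_sq_sum_smul {ι : Type*} (s : Finset ι) (w : ι → ℝ) (v : ι → F) :
    ‖∑ i ∈ s, w i • v i‖ ^ 2 = ∑ i ∈ s, ∑ j ∈ s, w i * w j * ⟪v i, v j⟫ := by
  rw [← real_inner_self_eq_norm_sq, sum_inner]
  refine sum_congr rfl fun i _ => ?_
  rw [inner_sum]
  refine sum_congr rfl fun j _ => ?_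
  rw [real_inner_smul_left, real_inner_smul_right, mul_assoc]

theorem add_norm_sq_sum_smul_le {ι : Type*} (s : Finset ι) {w : ι → ℝ}
    (hw₀ : ∀ i ∈ s, 0 ≤ w i) (hw₁ : ∑ i ∈ s, w i = 1) {a : ι → F} {b : ι → E} {m : ℝ}
    (hab : ∀ i ∈ s, ∀ j ∈ s, m + ⟪b i, b j⟫ ≤ ⟪a i, a j⟫) :
    m + ‖∑ i ∈ s, w i • b i‖ ^ 2 ≤ ‖∑ i ∈ s, w i • a i‖ ^ 2 := by
  calc m + ‖∑ i ∈ s, w i • b i‖ ^ 2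
      = ∑ i ∈ s, ∑ j ∈ s, w i * w j * (m + ⟪b i, b j⟫) := by
        simp only [norm_sq_sum_smul, mul_add, sum_add_distrib, ← sum_mul, ← mul_sum, hw₁,
          mul_one, one_mul]
    _ ≤ ∑ i ∈ s, ∑ j ∈ s, w i * w j * ⟪a i, a j⟫ := by
        gcongr with i hi j hj
        · exact mul_nonneg (hw₀ i hi) (hw₀ j hj)
        · exact hab i hi j hj
    _ = ‖∑ i ∈ s, w i • a i‖ ^ 2 := (norm_sq_sum_smul s w a).symm

theorem add_inner_le_inner_of_norm_sq_eq {a a' : F} {b b' : E} {m : ℝ}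
    (ha : ‖a‖ ^ 2 = m + ‖b‖ ^ 2) (ha' : ‖a'‖ ^ 2 = m + ‖b'‖ ^ 2) (h : ‖a - a'‖ ≤ ‖b - b'‖) :
    m + ⟪b, b'⟫ ≤ ⟪a, a'⟫ := by
  have h2 : ‖a - a'‖ ^ 2 ≤ ‖b - b'‖ ^ 2 := by gcongr
  rw [norm_sub_sq_real, norm_sub_sq_real] at h2
  linarith

theorem exists_forall_norm_sub_lt_of_notMem {D : Set F} (hDc : Convex ℝ D) (hD : IsComplete D)
    (hne : D.Nonempty) {q : F} (hq : q ∉ D) :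
    ∃ z ∈ D, ∀ c ∈ D, ∀ s ∈ Set.Ioc (0 : ℝ) 1, ‖q + s • (z - q) - c‖ < ‖q - c‖ := by
  obtain ⟨z, hzD, hz⟩ := exists_norm_eq_iInf_of_complete_convex hne hD hDc q
  have hproj := (norm_eq_iInf_iff_real_inner_le_zero hDc hzD).1 hz
  have hδ : 0 < ‖z - q‖ := norm_pos_iff.2 (sub_ne_zero.2 fun h => hq (h ▸ hzD))
  refine ⟨z, hzD, fun c hc s ⟨hs₀, hs₁⟩ => ?_⟩
  have hsep : ⟪q - c, z - q⟫ ≤ -‖z - q‖ ^ 2 := by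
    have e : ⟪q - c, z - q⟫ = ⟪q - z, c - z⟫ - ‖z - q‖ ^ 2 := by
      rw [← real_inner_self_eq_norm_sq]
      simp only [inner_sub_left, inner_sub_right, real_inner_comm]
      ring
    linarith [hproj c hc]
  have e : q + s • (z - q) - c = (q - c) + s • (z - q) := by abel
  rw [← sq_lt_sq₀ (norm_nonneg _) (norm_nonneg _), e, norm_add_sq_real, real_inner_smul_right,
    norm_smul, Real.norm_of_nonneg hs₀.le]
  nlinarith [mul_pos hs₀ (pow_pos hδ 2), hsep]

theorem nonpos_of_mem_convexHull_of_norm_sq_eq {A : Set E} {f : E → F}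
    (hf : LipschitzOnWith 1 f A) {p : E} {q : F} {m : ℝ}
    (hA : ∀ x ∈ A, ‖q - f x‖ ^ 2 = m + ‖p - x‖ ^ 2) (hq : q ∈ convexHull ℝ (f '' A)) :
    m ≤ 0 := by
  obtain ⟨ι, _, w, z, hw₀, hw₁, hz, hwz⟩ := mem_convexHull_iff_exists_fintype.1 hq
  choose x hxA hfx using hz
  have hab : ∀ i ∈ univ, ∀ j ∈ univ,
      m + ⟪p - x i, p - x j⟫ ≤ ⟪q - f (x i), q - f (x j)⟫ := fun i _ j _ => by
    refine add_inner_le_inner_of_norm_sq_eq (hA _ (hxA i)) (hA _ (hxA j)) ?_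
    simpa [dist_eq_norm] using hf.dist_le_mul _ (hxA j) _ (hxA i)
  have hcenter : ∑ i, w i • (q - f (x i)) = 0 := by
    simp only [smul_sub, sum_sub_distrib, ← sum_smul, hw₁, one_smul, hfx, hwz, sub_self]
  have hkey := add_norm_sq_sum_smul_le univ (fun i _ => hw₀ i) hw₁ hab
  rw [hcenter, norm_zero] at hkey
  nlinarith [sq_nonneg ‖∑ i, w i • (p - x i)‖]

theorem mem_convexHull_active_of_forall_exists_le {ι : Type*} {t : Finset ι} {c : ι → F}
    {r : ι → ℝ} {K : Set F} (hK : Convex ℝ K) (hcK : c '' t ⊆ K) {q₀ : F} (hq₀ : q₀ ∈ K)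
    {m : ℝ} (hle : ∀ i ∈ t, ‖q₀ - c i‖ ^ 2 - r i ≤ m)
    (hmin : ∀ q ∈ K, ∃ i ∈ t, m ≤ ‖q - c i‖ ^ 2 - r i) :
    q₀ ∈ convexHull ℝ (c '' {i | i ∈ t ∧ ‖q₀ - c i‖ ^ 2 - r i = m}) := by
  set A := {i | i ∈ t ∧ ‖q₀ - c i‖ ^ 2 - r i = m}
  have hAt : A ⊆ t := fun i hi => hi.1
  have hne : (convexHull ℝ (c '' A)).Nonempty := by
    obtain ⟨i, hi, hmi⟩ := hmin q₀ hq₀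
    exact ⟨c i, subset_convexHull ℝ _ ⟨i, ⟨hi, le_antisymm (hle i hi) hmi⟩, rfl⟩⟩
  by_contra hq
  obtain ⟨z, hzA, hz⟩ := exists_forall_norm_sub_lt_of_notMem (convex_convexHull ℝ _)
    (((t.finite_toSet.subset hAt).image c).isCompact_convexHull ℝ).isComplete hne hq
  have hzK : z ∈ K := convexHull_min ((Set.image_mono hAt).trans hcK) hK hzA
  have hseg : ∀ᶠ s in 𝓝[>] (0 : ℝ), s ∈ Set.Ioc (0 : ℝ) 1 := Ioc_mem_nhdsGT one_pos
  have hlt : ∀ i ∈ t, ∀ᶠ s in 𝓝[>] (0 : ℝ), ‖q₀ + s • (z - q₀) - c i‖ ^ 2 - r i < m := by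
    intro i hi
    by_cases hiA : i ∈ A
    · filter_upwards [hseg] with s hs
      have hcloser := hz (c i) (subset_convexHull ℝ _ ⟨i, hiA, rfl⟩) s hs
      linarith [pow_lt_pow_left₀ hcloser (norm_nonneg _) two_ne_zero, hiA.2]
    · have hcont : Continuous fun s : ℝ => ‖q₀ + s • (z - q₀) - c i‖ ^ 2 - r i := by fun_prop
      have hlim := (hcont.tendsto' 0 (‖q₀ - c i‖ ^ 2 - r i) (by simp)).mono_left
        (nhdsWithin_le_nhds (s := Set.Ioi 0))
      exact hlim.eventually_lt_const ((hle i hi).lt_of_ne fun h => hiA ⟨hi, h⟩)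
  obtain ⟨s, hs, hlts⟩ := (hseg.and ((eventually_all_finset t).2 hlt)).exists
  obtain ⟨i, hi, hmi⟩ := hmin _ (hK.add_smul_sub_mem hq₀ hzK ⟨hs.1.le, hs.2⟩)
  exact (hlts i hi).not_ge hmi

theorem exists_mem_convexHull_forall_norm_sub_le {t : Finset E} (ht : t.Nonempty) {f : E → F}
    (hf : LipschitzOnWith 1 f t) (p : E) :
    ∃ q ∈ convexHull ℝ (f '' t), ∀ x ∈ t, ‖q - f x‖ ≤ ‖p - x‖ := by
  set Φ : F → ℝ := fun q => t.sup' ht fun x => ‖q - f x‖ ^ 2 - ‖p - x‖ ^ 2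
  have hK : IsCompact (convexHull ℝ (f '' t)) := (t.finite_toSet.image f).isCompact_convexHull ℝ
  have hΦ : Continuous Φ := Continuous.finset_sup'_apply ht fun x _ => by fun_prop
  obtain ⟨q₀, hq₀, hmin⟩ := hK.exists_isMinOn (ht.to_set.image f).convexHull hΦ.continuousOn
  have hle : ∀ x ∈ t, ‖q₀ - f x‖ ^ 2 - ‖p - x‖ ^ 2 ≤ Φ q₀ := fun x hx =>
    le_sup' (fun x => ‖q₀ - f x‖ ^ 2 - ‖p - x‖ ^ 2) hx
  have hactive := mem_convexHull_active_of_forall_exists_le (convex_convexHull ℝ _)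
    (subset_convexHull ℝ _) hq₀ hle fun q hq => (le_sup'_iff ht).1 (hmin hq)
  have hΦq₀ : Φ q₀ ≤ 0 := nonpos_of_mem_convexHull_of_norm_sq_eq (hf.mono fun x hx => hx.1)
    (fun x hx => by linarith [hx.2]) hactive
  refine ⟨q₀, hq₀, fun x hx => ?_⟩
  rw [← pow_le_pow_iff_left₀ (norm_nonneg _) (norm_nonneg _) two_ne_zero]
  linarith [hle x hx]

theorem exists_mem_closure_convexHull_forall_norm_sub_le [ProperSpace F] {S : Set E}
    (hS : S.Nonempty) {f : E → F} (hf : LipschitzOnWith 1 f S) (p : E) :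
    ∃ q ∈ closure (convexHull ℝ (f '' S)), ∀ x ∈ S, ‖q - f x‖ ≤ ‖p - x‖ := by
  classical
  obtain ⟨x₀, hx₀⟩ := hS
  let B : S → Set F := fun x => closedBall (f x) ‖p - x‖
  have hcompact : IsCompact (closure (convexHull ℝ (f '' S)) ∩ closedBall (f x₀) ‖p - x₀‖) :=
    (isCompact_closedBall _ _).inter_left isClosed_closure
  have hfinite : ∀ u : Finset S,
      (closure (convexHull ℝ (f '' S)) ∩ closedBall (f x₀) ‖p - x₀‖ ∩ ⋂ x ∈ u, B x).Nonempty := by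
    intro u
    set t := insert x₀ (u.image Subtype.val)
    have htS : (t : Set E) ⊆ S := by simp [t, Set.insert_subset_iff, hx₀]
    obtain ⟨q, hq, hqt⟩ := exists_mem_convexHull_forall_norm_sub_le (insert_nonempty _ _)
      (hf.mono htS) p
    refine ⟨q, ⟨subset_closure (convexHull_mono (Set.image_mono htS) hq), ?_⟩, ?_⟩
    · simpa [dist_eq_norm] using hqt x₀ (mem_insert_self _ _)
    · simp only [Set.mem_iInter]
      intro x hx
      simpa [B, dist_eq_norm] using hqt x (mem_insert_of_mem (mem_image_of_mem _ hx))
  obtain ⟨q, ⟨hqC, -⟩, hqB⟩ :=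
    hcompact.inter_iInter_nonempty B (fun _ => isClosed_closedBall) hfinite
  refine ⟨q, hqC, fun x hx => ?_⟩
  simpa [B, dist_eq_norm] using Set.mem_iInter.1 hqB ⟨x, hx⟩

/-- One-point Kirszbraun–Valentine extension in the plane: given a 1-Lipschitz map `f`
on a nonempty set `S ⊆ ℝ²` and a point `p`, there is a point `p'` in the closure of the
convex hull of `f '' S` with `‖p' - f x‖ ≤ ‖p - x‖` for all `x ∈ S`. -/
theorem one_point_extension_plane
    (S : Set (EuclideanSpace ℝ (Fin 2))) (hS : S.Nonempty)
    (f : EuclideanSpace ℝ (Fin 2) → EuclideanSpace ℝ (Fin 2))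
    (hf : ∀ x ∈ S, ∀ y ∈ S, ‖f x - f y‖ ≤ ‖x - y‖)
    (p : EuclideanSpace ℝ (Fin 2)) :
    ∃ p' ∈ closure (convexHull ℝ (f '' S)), ∀ x ∈ S, ‖p' - f x‖ ≤ ‖p - x‖ :=
  exists_mem_closure_convexHull_forall_norm_sub_le hS
    (LipschitzOnWith.mk_one fun x hx y hy => by simpa only [dist_eq_norm] using hf x hx y hy) p
end

section
/- Fix six points x₁, x₂, x₃, x₁', x₂', x₃' in the Euclidean plane ℝ² such that ‖xᵢ' − xⱼ'‖ ≤ ‖xᵢ − xⱼ‖ for every i, j ∈ {1,2,3}. Then for any point x₄ ∈ ℝ² there is a point x₄' contained in the convex hull of {x₁', x₂', x₃'} (the filled triangle Δ(x₁', x₂', x₃')) such that ‖x₄' − xᵢ'‖ ≤ ‖x₄ − xᵢ‖ for every i ∈ {1,2,3}. -/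
/-!
The argument is Kirszbraun's, by Lagrangian duality; it works for finitely many points in any
real inner product space. For weights `w` in the standard simplex put
`L(y, w) = ∑ wᵢ (‖y - qᵢ‖² - ‖x - pᵢ‖²)`. As a function of `y` this is `‖y - c_w‖² + dual w`
with `c_w = ∑ wᵢ qᵢ`. Writing weighted sums of squared distances through the pairwise distances
shows `dual w ≤ 0` as soon as the `qᵢ` are pairwise closer than the `pᵢ`. At a maximiser `w` of
`dual` on the simplex, shifting weight towards the vertex `i` cannot increase `dual`, which
yields `‖c_w - qᵢ‖² - ‖x - pᵢ‖² ≤ dual w ≤ 0`; so `c_w` is the required point.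
-/

open Finset Filter Topology

theorem sum_mul_norm_sub_sq_eq {E : Type*} [NormedAddCommGroup E] [InnerProductSpace ℝ E]
    {ι : Type*} [Fintype ι] {w : ι → ℝ} (hw : ∑ i, w i = 1) (v : ι → E) (z : E) :
    ∑ i, w i * ‖z - v i‖ ^ 2 =
      ‖z - ∑ i, w i • v i‖ ^ 2 + (∑ i, ∑ j, w i * w j * ‖v i - v j‖ ^ 2) / 2 := by
  have hc : ‖∑ i, w i • v i‖ ^ 2 = ∑ i, ∑ j, w i * w j * inner ℝ (v i) (v j) := by
    rw [← real_inner_self_eq_norm_sq, sum_inner]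
    simp only [inner_sum, real_inner_smul_left, real_inner_smul_right]
    exact sum_congr rfl fun i _ => sum_congr rfl fun j _ => by ring
  have hz : inner ℝ z (∑ i, w i • v i) = ∑ i, w i * inner ℝ z (v i) := by
    simp only [inner_sum, real_inner_smul_right]
  simp only [norm_sub_sq_real, hc, hz, mul_add, mul_sub, sum_add_distrib, sum_sub_distrib,
    mul_left_comm _ (2 : ℝ), mul_assoc, ← mul_sum, ← sum_mul, hw, one_mul]
  ring

namespace Kirszbraun

variable {E : Type*} [NormedAddCommGroup E] {ι : Type*} [Fintype ι]

def lagrangian (p q : ι → E) (x y : E) (w : ι → ℝ) : ℝ :=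
  ∑ i, w i * (‖y - q i‖ ^ 2 - ‖x - p i‖ ^ 2)

variable {p q : ι → E} {x : E}

theorem lagrangian_smul_add_single [DecidableEq ι] (y : E) (w : ι → ℝ) (s t : ℝ) (i : ι) :
    lagrangian p q x y (s • w + t • Pi.single i 1) =
      s * lagrangian p q x y w + t * (‖y - q i‖ ^ 2 - ‖x - p i‖ ^ 2) := by
  simp [lagrangian, add_mul, sum_add_distrib, mul_sum, mul_assoc, Pi.single_apply]

variable [InnerProductSpace ℝ E]

def dual (p q : ι → E) (x : E) (w : ι → ℝ) : ℝ :=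
  lagrangian p q x (∑ i, w i • q i) w

theorem lagrangian_eq_norm_sq_add_dual {w : ι → ℝ} (hw : ∑ i, w i = 1) (y : E) :
    lagrangian p q x y w = ‖y - ∑ i, w i • q i‖ ^ 2 + dual p q x w := by
  simp only [dual, lagrangian, mul_sub, sum_sub_distrib, sum_mul_norm_sub_sq_eq hw, sub_self,
    norm_zero]
  ring

theorem dual_nonpos (hpq : ∀ i j, ‖q i - q j‖ ≤ ‖p i - p j‖) {w : ι → ℝ}
    (hw : w ∈ stdSimplex ℝ ι) : dual p q x w ≤ 0 := by
  have hsq : ∀ i j, w i * w j * ‖q i - q j‖ ^ 2 ≤ w i * w j * ‖p i - p j‖ ^ 2 := fun i j =>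
    mul_le_mul_of_nonneg_left (pow_le_pow_left₀ (norm_nonneg _) (hpq i j) 2)
      (mul_nonneg (hw.1 i) (hw.1 j))
  have hpairs := sum_le_sum fun i (_ : i ∈ univ) => sum_le_sum fun j (_ : j ∈ univ) => hsq i j
  simp only [dual, lagrangian, mul_sub, sum_sub_distrib, sum_mul_norm_sub_sq_eq hw.2, sub_self,
    norm_zero]
  nlinarith [norm_nonneg (x - ∑ i, w i • p i)]

theorem sub_le_dual_of_isMaxOn {w : ι → ℝ} (hw : w ∈ stdSimplex ℝ ι)
    (hmax : IsMaxOn (dual p q x) (stdSimplex ℝ ι) w) (i : ι) :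
    ‖∑ j, w j • q j - q i‖ ^ 2 - ‖x - p i‖ ^ 2 ≤ dual p q x w := by
  classical
  set c := ∑ j, w j • q j
  set D := ‖c - q i‖ ^ 2
  have hshift : ∀ t ∈ Set.Ioo (0 : ℝ) 1, (1 - t) * D - ‖x - p i‖ ^ 2 ≤ dual p q x w := by
    rintro t ⟨ht0, ht1⟩
    set wt := (1 - t) • w + t • Pi.single i (1 : ℝ)
    have hwt : wt ∈ stdSimplex ℝ ι := convex_stdSimplex ℝ ι hw (single_mem_stdSimplex ℝ i)
      (by linarith) ht0.le (by ring)
    have hct : ∑ j, wt j • q j = c + t • (q i - c) := by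
      simp only [wt, Pi.add_apply, Pi.smul_apply, smul_eq_mul, Pi.single_apply, mul_ite,
        mul_one, mul_zero, add_smul, mul_smul, ite_smul, zero_smul, sum_add_distrib,
        ← smul_sum, sum_ite_eq', mem_univ, ↓reduceIte, c]
      module
    have hle : dual p q x wt ≤ dual p q x w := hmax hwt
    rw [dual, hct, lagrangian_smul_add_single, lagrangian_eq_norm_sq_add_dual hw.2] at hle
    have hc : ‖c + t • (q i - c) - c‖ ^ 2 = t ^ 2 * D := by
      rw [add_sub_cancel_left, norm_smul, mul_pow, Real.norm_eq_abs, sq_abs, norm_sub_rev]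
    have hqi : ‖c + t • (q i - c) - q i‖ ^ 2 = (1 - t) ^ 2 * D := by
      rw [show c + t • (q i - c) - q i = (1 - t) • (c - q i) by module, norm_smul, mul_pow,
        Real.norm_eq_abs, sq_abs]
    rw [hc, hqi] at hle
    nlinarith
  have hlim : Tendsto (fun t : ℝ => (1 - t) * D - ‖x - p i‖ ^ 2) (𝓝[>] 0)
      (𝓝 (D - ‖x - p i‖ ^ 2)) :=
    tendsto_nhdsWithin_of_tendsto_nhds (Continuous.tendsto' (by fun_prop) 0 _ (by simp))
  exact le_of_tendsto hlim (mem_of_superset (Ioo_mem_nhdsGT one_pos) hshift)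

theorem exists_mem_convexHull_norm_sub_le [Nonempty ι] (hpq : ∀ i j, ‖q i - q j‖ ≤ ‖p i - p j‖)
    (x : E) : ∃ y ∈ convexHull ℝ (Set.range q), ∀ i, ‖y - q i‖ ≤ ‖x - p i‖ := by
  have hcont : Continuous (dual p q x) := by
    unfold dual lagrangian
    fun_prop
  obtain ⟨w, hw, hmax⟩ := (isCompact_stdSimplex ℝ ι).exists_isMaxOn
    (isPathConnected_stdSimplex ι).nonempty hcont.continuousOn
  refine ⟨∑ i, w i • q i, (convex_convexHull ℝ _).sum_mem (fun i _ => hw.1 i) hw.2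
    fun i _ => subset_convexHull ℝ _ (Set.mem_range_self i), fun i => ?_⟩
  have hsq := (sub_le_dual_of_isMaxOn hw hmax i).trans (dual_nonpos hpq hw)
  exact (pow_le_pow_iff_left₀ (norm_nonneg _) (norm_nonneg _) two_ne_zero).1 (by linarith)

end Kirszbraun

/-- Valentine's triangle lemma (Lemma 3.6 of the paper): if the three mutual distances
of `x₁', x₂', x₃'` do not exceed those of `x₁, x₂, x₃`, then for any `x₄` there is a
point `x₄'` of the filled triangle `Δ(x₁', x₂', x₃')` with `‖x₄' - xᵢ'‖ ≤ ‖x₄ - xᵢ‖`. -/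
theorem valentine_triangle_lemma
    (x₁ x₂ x₃ x₁' x₂' x₃' : EuclideanSpace ℝ (Fin 2))
    (h12 : ‖x₁' - x₂'‖ ≤ ‖x₁ - x₂‖)
    (h13 : ‖x₁' - x₃'‖ ≤ ‖x₁ - x₃‖)
    (h23 : ‖x₂' - x₃'‖ ≤ ‖x₂ - x₃‖)
    (x₄ : EuclideanSpace ℝ (Fin 2)) :
    ∃ x₄' ∈ convexHull ℝ ({x₁', x₂', x₃'} : Set (EuclideanSpace ℝ (Fin 2))),
      ‖x₄' - x₁'‖ ≤ ‖x₄ - x₁‖ ∧ ‖x₄' - x₂'‖ ≤ ‖x₄ - x₂‖ ∧ ‖x₄' - x₃'‖ ≤ ‖x₄ - x₃‖ := by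
  have hpq : ∀ i j, ‖![x₁', x₂', x₃'] i - ![x₁', x₂', x₃'] j‖ ≤
      ‖![x₁, x₂, x₃] i - ![x₁, x₂, x₃] j‖ := by
    intro i j
    fin_cases i <;> fin_cases j <;> simp [norm_sub_rev, h12, h13, h23]
  obtain ⟨y, hy, hdist⟩ := Kirszbraun.exists_mem_convexHull_norm_sub_le hpq x₄
  rw [Matrix.range_cons, Matrix.range_cons_cons_empty, Set.singleton_union] at hy
  exact ⟨y, hy, hdist 0, hdist 1, hdist 2⟩
end

section
/- In the Euclidean plane ℝ² let a = (0,0), b = (1,0), c = (1/2, √3/2) and c' = (1/2, √3), and set T₁ = convexHull{a, b, c} (an equilateral triangle with sides of length 1) and T₂ = convexHull{a, b, c'} (an isosceles triangle with base of length 1 and height √3). If K ≥ 0 and f : ℝ² → ℝ² satisfies ‖f(x) − f(y)‖ ≤ K‖x − y‖ for all x, y ∈ T₁, maps T₁ into T₂, sends the base segment [a, b] into the segment [a, b], and satisfies f(c) = c', then K ≥ 2. In particular K strictly exceeds √13/2, the maximal ratio of lengths of corresponding sides of T₁ and T₂. -/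
/-! The midpoint of the base `[a, b]` lies at distance `√3 / 2` from `c`, while its image lies on
the base, hence at distance at least `√3` (the height of `c'`) from `f c = c'`. So
`K ≥ √3 / (√3 / 2) = 2`, and `2 > √13 / 2` because `13 < 16`. -/

noncomputable section

/-- The vertices of the equilateral triangle `T₁` and of the isosceles triangle `T₂`. -/
def ptA : EuclideanSpace ℝ (Fin 2) := !₂[0, 0]
def ptB : EuclideanSpace ℝ (Fin 2) := !₂[1, 0]
def ptC : EuclideanSpace ℝ (Fin 2) := !₂[1/2, Real.sqrt 3 / 2]
def ptC' : EuclideanSpace ℝ (Fin 2) := !₂[1/2, Real.sqrt 3]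

/-- The equilateral triangle with vertices `(0,0)`, `(1,0)`, `(1/2, √3/2)`. -/
def T₁ : Set (EuclideanSpace ℝ (Fin 2)) := convexHull ℝ {ptA, ptB, ptC}

/-- The isosceles triangle with vertices `(0,0)`, `(1,0)`, `(1/2, √3)`. -/
def T₂ : Set (EuclideanSpace ℝ (Fin 2)) := convexHull ℝ {ptA, ptB, ptC'}

open Real

lemma apply_eq_zero_of_mem_segment {ι : Type*} {x y z : EuclideanSpace ℝ ι} {i : ι}
    (hx : x i = 0) (hy : y i = 0) (hz : z ∈ segment ℝ x y) : z i = 0 := by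
  obtain ⟨u, v, -, -, -, rfl⟩ := hz
  simp [hx, hy]

lemma sqrt_three_le_norm_ptC'_sub {y : EuclideanSpace ℝ (Fin 2)} (hy : y 1 = 0) :
    √3 ≤ ‖ptC' - y‖ :=
  calc √3 = ‖(ptC' - y) 1‖ := by simp [ptC', hy, abs_of_nonneg (sqrt_nonneg 3)]
    _ ≤ ‖ptC' - y‖ := PiLp.norm_apply_le _ _

lemma norm_ptC_sub_midpoint : ‖ptC - midpoint ℝ ptA ptB‖ = √3 / 2 := by
  rw [EuclideanSpace.norm_eq, Fin.sum_univ_two, midpoint_eq_smul_add]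
  simp [ptA, ptB, ptC, abs_of_nonneg (sqrt_nonneg 3)]
  exact sqrt_sq (by positivity)

lemma segment_ptA_ptB_subset_T₁ : segment ℝ ptA ptB ⊆ T₁ :=
  segment_subset_convexHull (by simp) (by simp)

lemma ptC_mem_T₁ : ptC ∈ T₁ := subset_convexHull ℝ _ (by simp)

theorem lipschitz_triangle_counterexample_general
    (K : ℝ)
    (f : EuclideanSpace ℝ (Fin 2) → EuclideanSpace ℝ (Fin 2))
    (hlip : ∀ x ∈ T₁, ∀ y ∈ T₁, ‖f x - f y‖ ≤ K * ‖x - y‖)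
    (hbase : ∀ x ∈ segment ℝ ptA ptB, f x ∈ segment ℝ ptA ptB)
    (hapex : f ptC = ptC') :
    2 ≤ K ∧ Real.sqrt 13 / 2 < K := by
  have hm : midpoint ℝ ptA ptB ∈ segment ℝ ptA ptB := midpoint_mem_segment _ _
  have hstretch : √3 ≤ K * (√3 / 2) := by
    calc √3 ≤ ‖f ptC - f (midpoint ℝ ptA ptB)‖ :=
          hapex ▸ sqrt_three_le_norm_ptC'_sub
            (apply_eq_zero_of_mem_segment (by simp [ptA]) (by simp [ptB]) (hbase _ hm))
      _ ≤ K * ‖ptC - midpoint ℝ ptA ptB‖ :=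
          hlip _ ptC_mem_T₁ _ (segment_ptA_ptB_subset_T₁ hm)
      _ = K * (√3 / 2) := by rw [norm_ptC_sub_midpoint]
  have h2K : 2 ≤ K := by nlinarith [sqrt_pos.2 (show (0 : ℝ) < 3 by norm_num)]
  have hsqrt13 : √13 < 4 := by
    rw [sqrt_lt' (by norm_num)]; norm_num
  exact ⟨h2K, by linarith⟩

/-- The Example of Section 2.4 of the paper: any `K`-Lipschitz map from the equilateral
triangle `T₁` to the isosceles triangle `T₂` sending the base segment into the base
segment and the apex to the apex must have `K ≥ 2 > √13 / 2`. -/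
theorem lipschitz_triangle_counterexample
    (K : ℝ) (hK : 0 ≤ K)
    (f : EuclideanSpace ℝ (Fin 2) → EuclideanSpace ℝ (Fin 2))
    (hlip : ∀ x ∈ T₁, ∀ y ∈ T₁, ‖f x - f y‖ ≤ K * ‖x - y‖)
    (hmap : ∀ x ∈ T₁, f x ∈ T₂)
    (hbase : ∀ x ∈ segment ℝ ptA ptB, f x ∈ segment ℝ ptA ptB)
    (hapex : f ptC = ptC') :
    2 ≤ K ∧ Real.sqrt 13 / 2 < K :=
  lipschitz_triangle_counterexample_general K f hlip hbase hapex

end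
end

section
/- Let x₁, x₂, x₃ and x₁', x₂', x₃' be points of the Euclidean plane ℝ² such that ‖xᵢ' − xⱼ'‖ ≤ ‖xᵢ − xⱼ‖ for all i, j ∈ {1,2,3}, and set Δ = convexHull{x₁, x₂, x₃} and Δ' = convexHull{x₁', x₂', x₃'}. Then there exists a map f : ℝ² → ℝ² which is 1-Lipschitz on Δ, maps Δ into Δ', and satisfies f(xᵢ) = xᵢ' for i = 1, 2, 3. -/
/-!
The vertex assignment `xᵢ ↦ xᵢ'` is 1-Lipschitz on the three vertices, so it suffices to extend
1-Lipschitz maps with values in a compact convex set `S` (Kirszbraun–Valentine). To add one point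
`x` to a finite domain `A`, minimise `max_a (‖y - g a‖² - ‖x - a‖²)` over the convex hull of
`g(A)`. At a minimiser `y` the active centres `g a` contain `y` in their convex hull (otherwise
moving towards the nearest point of that hull lowers every active term), and averaging with the
barycentric weights, via `∑ᵢⱼ wᵢ wⱼ ‖uᵢ - uⱼ‖² = 2 ∑ᵢ wᵢ ‖uᵢ‖² - 2 ‖∑ᵢ wᵢ uᵢ‖²`, shows that the
maximum is `≤ 0`. Adding points one at a time handles every finite set of constraints, and
compactness of the product `S^F` then meets all of them at once.
-/

open Finset Set Filter Topology
open scoped RealInnerProductSpace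

theorem LipschitzOnWith.update_insert {α β : Type*} [PseudoMetricSpace α] [PseudoMetricSpace β]
    [DecidableEq α] {f : α → β} {s : Set α} (hf : LipschitzOnWith 1 f s) {x : α} (hx : x ∉ s)
    {y : β} (hy : ∀ b ∈ s, dist y (f b) ≤ dist x b) :
    LipschitzOnWith 1 (Function.update f x y) (insert x s) := by
  have hne : ∀ b ∈ s, b ≠ x := fun b hb h => hx (h ▸ hb)
  refine LipschitzOnWith.mk_one ?_
  rintro a (rfl | ha) b (rfl | hb)
  · simp
  · rw [Function.update_self, Function.update_of_ne (hne b hb)]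
    exact hy b hb
  · rw [Function.update_self, Function.update_of_ne (hne a ha), dist_comm, dist_comm a]
    exact hy a ha
  · rw [Function.update_of_ne (hne a ha), Function.update_of_ne (hne b hb)]
    simpa using hf.dist_le_mul a ha b hb

section Kirszbraun

variable {ι F E : Type*} [NormedAddCommGroup E] [InnerProductSpace ℝ E]
  [NormedAddCommGroup F] [InnerProductSpace ℝ F]

theorem sum_sum_mul_mul_norm_sub_sq {s : Finset ι} {w : ι → ℝ} (hw : ∑ i ∈ s, w i = 1)
    (u : ι → E) :
    ∑ i ∈ s, ∑ j ∈ s, w i * w j * ‖u i - u j‖ ^ 2 =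
      2 * ∑ i ∈ s, w i * ‖u i‖ ^ 2 - 2 * ‖∑ i ∈ s, w i • u i‖ ^ 2 := by
  have hnorm : ∑ i ∈ s, ∑ j ∈ s, w i * w j * ‖u i‖ ^ 2 = ∑ i ∈ s, w i * ‖u i‖ ^ 2 :=
    sum_congr rfl fun i _ => by rw [← sum_mul, ← mul_sum, hw, mul_one]
  have hinner : ‖∑ i ∈ s, w i • u i‖ ^ 2 = ∑ i ∈ s, ∑ j ∈ s, w i * w j * ⟪u i, u j⟫ := by
    rw [← real_inner_self_eq_norm_sq, sum_inner]
    refine sum_congr rfl fun i _ => ?_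
    rw [inner_sum]
    refine sum_congr rfl fun j _ => ?_
    rw [real_inner_smul_left, real_inner_smul_right, mul_assoc]
  calc ∑ i ∈ s, ∑ j ∈ s, w i * w j * ‖u i - u j‖ ^ 2
      = ∑ i ∈ s, ∑ j ∈ s, (w i * w j * ‖u i‖ ^ 2 + w j * w i * ‖u j‖ ^ 2
          - 2 * (w i * w j * ⟪u i, u j⟫)) :=
        sum_congr rfl fun i _ => sum_congr rfl fun j _ => by rw [norm_sub_sq_real]; ring
    _ = 2 * ∑ i ∈ s, w i * ‖u i‖ ^ 2 - 2 * ‖∑ i ∈ s, w i • u i‖ ^ 2 := by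
        simp only [sum_sub_distrib, sum_add_distrib, ← mul_sum]
        rw [sum_comm (f := fun i j => w j * w i * ‖u j‖ ^ 2), hnorm, hinner]
        ring

theorem sum_mul_norm_centerMass_sub_sq_le {s : Finset ι} {w : ι → ℝ} (hw₀ : ∀ i ∈ s, 0 ≤ w i)
    (hw₁ : ∑ i ∈ s, w i = 1) {p : ι → F} {q : ι → E}
    (hpq : ∀ i ∈ s, ∀ j ∈ s, ‖q i - q j‖ ≤ ‖p i - p j‖) (x : F) :
    ∑ i ∈ s, w i * ‖∑ j ∈ s, w j • q j - q i‖ ^ 2 ≤ ∑ i ∈ s, w i * ‖x - p i‖ ^ 2 := by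
  set y := ∑ j ∈ s, w j • q j
  have hq := sum_sum_mul_mul_norm_sub_sq hw₁ fun i => q i - y
  have hp := sum_sum_mul_mul_norm_sub_sq hw₁ fun i => p i - x
  have hcentre : ∑ i ∈ s, w i • (q i - y) = 0 := by
    simp only [smul_sub, sum_sub_distrib, ← sum_smul, hw₁, one_smul, y, sub_self]
  have hmono : ∑ i ∈ s, ∑ j ∈ s, w i * w j * ‖(q i - y) - (q j - y)‖ ^ 2 ≤
      ∑ i ∈ s, ∑ j ∈ s, w i * w j * ‖(p i - x) - (p j - x)‖ ^ 2 := by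
    refine sum_le_sum fun i hi => sum_le_sum fun j hj => ?_
    simp only [sub_sub_sub_cancel_right]
    gcongr
    · exact mul_nonneg (hw₀ i hi) (hw₀ j hj)
    · exact hpq i hi j hj
  simp only [hcentre, norm_zero] at hq
  simp only [norm_sub_rev y, norm_sub_rev x]
  linarith [sq_nonneg ‖∑ i ∈ s, w i • (p i - x)‖]

theorem exists_mem_forall_norm_sub_sq_le_inner {K : Set E} (hne : K.Nonempty)
    (hK : IsComplete K) (hconv : Convex ℝ K) (y : E) :
    ∃ z ∈ K, ∀ b ∈ K, ‖y - z‖ ^ 2 ≤ ⟪y - z, y - b⟫ := by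
  obtain ⟨z, hzK, hz⟩ := exists_norm_eq_iInf_of_complete_convex hne hK hconv y
  refine ⟨z, hzK, fun b hb => ?_⟩
  have hobtuse := (norm_eq_iInf_iff_real_inner_le_zero hconv hzK).1 hz b hb
  rw [← sub_sub_sub_cancel_right y b z, inner_sub_right, real_inner_self_eq_norm_sq]
  linarith

theorem mem_convexHull_active_of_forall_exists_le_s7 {s : Finset ι} {c : ι → E} {r : ι → ℝ}
    {S : Set E} (hS : Convex ℝ S) (hcS : ∀ i ∈ s, c i ∈ S) {y : E} (hy : y ∈ S) {m : ℝ}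
    (hym : ∀ i ∈ s, ‖y - c i‖ ^ 2 + r i ≤ m)
    (hmin : ∀ y' ∈ S, ∃ i ∈ s, m ≤ ‖y' - c i‖ ^ 2 + r i) :
    y ∈ convexHull ℝ (c '' {i | i ∈ s ∧ m ≤ ‖y - c i‖ ^ 2 + r i}) := by
  set I := {i | i ∈ s ∧ m ≤ ‖y - c i‖ ^ 2 + r i}
  set K := convexHull ℝ (c '' I)
  by_contra hyK
  have hKS : K ⊆ S := convexHull_min (image_subset_iff.2 fun i hi => hcS i hi.1) hS
  have hKne : K.Nonempty := by
    obtain ⟨i, hi, hle⟩ := hmin y hy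
    exact ⟨c i, subset_convexHull ℝ _ ⟨i, ⟨hi, hle⟩, rfl⟩⟩
  have hKcompact : IsCompact K :=
    ((s.finite_toSet.subset fun _ (hi : _ ∈ I) => hi.1).image c).isCompact_convexHull ℝ
  obtain ⟨z, hzK, hz⟩ := exists_mem_forall_norm_sub_sq_le_inner hKne hKcompact.isComplete
    (convex_convexHull ℝ _) y
  have hδ : 0 < ‖y - z‖ ^ 2 := by
    have : y - z ≠ 0 := sub_ne_zero.2 fun h => hyK (h ▸ hzK)
    positivity
  have hexpand : ∀ i (t : ℝ), ‖y + t • (z - y) - c i‖ ^ 2 =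
      ‖y - c i‖ ^ 2 - 2 * t * ⟪y - z, y - c i⟫ + t ^ 2 * ‖y - z‖ ^ 2 := by
    intro i t
    rw [show y + t • (z - y) - c i = (y - c i) - t • (y - z) by module, norm_sub_sq_real,
      inner_smul_right, norm_smul, mul_pow, Real.norm_eq_abs, sq_abs, real_inner_comm]
    ring
  have hdescent : ∀ i ∈ s, ∀ᶠ t in 𝓝[>] (0 : ℝ), ‖y + t • (z - y) - c i‖ ^ 2 + r i < m := by
    intro i hi
    by_cases hactive : m ≤ ‖y - c i‖ ^ 2 + r i
    · have hangle := hz (c i) (subset_convexHull ℝ _ ⟨i, ⟨hi, hactive⟩, rfl⟩)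
      filter_upwards [Ioo_mem_nhdsGT one_pos] with t ⟨ht0, ht1⟩
      rw [hexpand]
      nlinarith [hym i hi, mul_pos ht0 hδ, mul_lt_mul_of_pos_left ht1 (mul_pos ht0 hδ)]
    · have hcont : Continuous fun t : ℝ => ‖y + t • (z - y) - c i‖ ^ 2 + r i := by fun_prop
      have h0 : ‖y + (0 : ℝ) • (z - y) - c i‖ ^ 2 + r i < m := by simpa using hactive
      exact ((hcont.tendsto 0).eventually_lt_const h0).filter_mono nhdsWithin_le_nhds
  obtain ⟨t, ht, ht0, ht1⟩ :=
    (((eventually_all_finset s).2 hdescent).and (Ioc_mem_nhdsGT one_pos)).exists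
  obtain ⟨i, hi, hle⟩ := hmin _ (hS.add_smul_sub_mem hy (hKS hzK) ⟨ht0.le, ht1⟩)
  exact (ht i hi).not_ge hle

theorem exists_mem_convexHull_forall_norm_sub_le_s7 {A : Finset F} (hA : A.Nonempty) {g : F → E}
    (hg : LipschitzOnWith 1 g A) (x : F) :
    ∃ y ∈ convexHull ℝ (g '' A), ∀ a ∈ A, ‖y - g a‖ ≤ ‖x - a‖ := by
  set K := convexHull ℝ (g '' A)
  have hK : IsCompact K := (A.finite_toSet.image g).isCompact_convexHull ℝ
  have hKne : K.Nonempty := (hA.to_set.image g).mono (subset_convexHull ℝ _)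
  set φ : E → ℝ := fun y => A.sup' hA fun a => ‖y - g a‖ ^ 2 + -‖x - a‖ ^ 2
  have hφ : Continuous φ := Continuous.finset_sup'_apply hA fun a _ => by fun_prop
  obtain ⟨y, hyK, hmin⟩ := hK.exists_isMinOn hKne hφ.continuousOn
  have hφ_le : ∀ a ∈ A, ‖y - g a‖ ^ 2 + -‖x - a‖ ^ 2 ≤ φ y := fun a ha =>
    le_sup' (fun a => ‖y - g a‖ ^ 2 + -‖x - a‖ ^ 2) ha
  refine ⟨y, hyK, fun a ha => ?_⟩
  suffices φ y ≤ 0 by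
    exact (sq_le_sq₀ (norm_nonneg _) (norm_nonneg _)).1 (by linarith [hφ_le a ha])
  by_contra! hpos
  have hhull : y ∈ convexHull ℝ (g '' {a | a ∈ A ∧ φ y ≤ ‖y - g a‖ ^ 2 + -‖x - a‖ ^ 2}) := by
    refine mem_convexHull_active_of_forall_exists_le_s7 (convex_convexHull ℝ _)
      (fun a ha => subset_convexHull ℝ _ (mem_image_of_mem g ha)) hyK hφ_le fun y' hy' => ?_
    obtain ⟨a, ha, heq⟩ := exists_mem_eq_sup' hA fun a => ‖y' - g a‖ ^ 2 + -‖x - a‖ ^ 2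
    exact ⟨a, ha, heq ▸ hmin hy'⟩
  obtain ⟨κ, _, w, z, hw₀, hw₁, hz, hwz⟩ := mem_convexHull_iff_exists_fintype.1 hhull
  choose a ha hza using hz
  have hbary := sum_mul_norm_centerMass_sub_sq_le (s := univ) (fun j _ => hw₀ j) hw₁
    (p := a) (q := z) (fun i _ j _ => by
      simpa [← hza i, ← hza j] using hg.norm_sub_le (ha i).1 (ha j).1) x
  have hactive : ∑ j, w j * (‖x - a j‖ ^ 2 + φ y) ≤ ∑ j, w j * ‖y - z j‖ ^ 2 :=
    sum_le_sum fun j _ => mul_le_mul_of_nonneg_left (by rw [← hza j]; linarith [(ha j).2]) (hw₀ j)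
  rw [hwz] at hbary
  simp only [mul_add, sum_add_distrib, ← sum_mul, hw₁, one_mul] at hactive
  linarith

theorem LipschitzOnWith.exists_extension_finset [DecidableEq F] {S : Set E} (hS : Convex ℝ S)
    {g : F → E} (hgS : ∀ x, g x ∈ S) {A : Finset F} (hg : LipschitzOnWith 1 g A)
    (T : Finset F) :
    ∃ h : F → E, (∀ x, h x ∈ S) ∧ EqOn h g A ∧ LipschitzOnWith 1 h ↑(A ∪ T) := by
  induction T using Finset.induction_on with
  | empty => exact ⟨g, hgS, fun _ _ => rfl, by simpa using hg⟩
  | insert x T _ ih =>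
    obtain ⟨h, hhS, hhg, hh⟩ := ih
    rw [Finset.union_insert]
    by_cases hx : x ∈ A ∪ T
    · rw [Finset.insert_eq_of_mem hx]
      exact ⟨h, hhS, hhg, hh⟩
    obtain ⟨y, hyS, hy⟩ : ∃ y ∈ S, ∀ b ∈ A ∪ T, ‖y - h b‖ ≤ ‖x - b‖ := by
      rcases (A ∪ T).eq_empty_or_nonempty with hempty | hne
      · exact ⟨h x, hhS x, by simp [hempty]⟩
      · obtain ⟨y, hy, hyb⟩ := exists_mem_convexHull_forall_norm_sub_le_s7 hne hh x
        exact ⟨y, convexHull_min (image_subset_iff.2 fun b _ => hhS b) hS hy, hyb⟩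
    refine ⟨Function.update h x y, fun z => ?_, fun a ha => ?_, ?_⟩
    · rw [Function.update_apply]
      split_ifs
      exacts [hyS, hhS z]
    · rw [Function.update_of_ne (ne_of_mem_of_not_mem (Finset.mem_union_left T ha) hx)]
      exact hhg ha
    · rw [Finset.coe_insert]
      exact hh.update_insert (mod_cast hx) fun b hb => by simpa [dist_eq_norm] using hy b hb

theorem LipschitzOnWith.extend_of_convex_of_isCompact {s : Set F} {f : F → E} {S : Set E}
    (hf : LipschitzOnWith 1 f s) (hfS : MapsTo f s S) (hS : Convex ℝ S) (hSc : IsCompact S)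
    (hSne : S.Nonempty) : ∃ g : F → E, LipschitzWith 1 g ∧ (∀ x, g x ∈ S) ∧ EqOn f g s := by
  classical
  obtain ⟨e, he⟩ := hSne
  let t : F × F → Set (F → E) := fun p =>
    {h | p.1 ∈ s → h p.1 = f p.1} ∩ {h | dist (h p.1) (h p.2) ≤ dist p.1 p.2}
  have ht : ∀ p, IsClosed (t p) := by
    refine fun p => IsClosed.inter ?_ (isClosed_le (by fun_prop) continuous_const)
    by_cases hp : p.1 ∈ s
    · simpa [hp] using isClosed_eq (continuous_apply p.1) continuous_const
    · simp [hp]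
  obtain ⟨g, hgS, hg⟩ := (isCompact_univ_pi fun _ => hSc).inter_iInter_nonempty t ht fun u => by
    let T : Finset F := u.image Prod.fst ∪ u.image Prod.snd
    let A : Finset F := T.filter (· ∈ s)
    let g₀ : F → E := s.piecewise f fun _ => e
    have hg₀f : EqOn g₀ f s := s.piecewise_eqOn f _
    have hg₀S : ∀ x, g₀ x ∈ S := fun x => by
      by_cases hx : x ∈ s
      · rw [hg₀f hx]; exact hfS hx
      · simpa [g₀, hx] using he
    have hAs : ∀ a ∈ A, a ∈ s := fun a ha => (mem_filter.1 ha).2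
    have hg₀ : LipschitzOnWith 1 g₀ A := LipschitzOnWith.mk_one fun a ha b hb => by
      rw [hg₀f (hAs a ha), hg₀f (hAs b hb)]
      simpa using hf.dist_le_mul a (hAs a ha) b (hAs b hb)
    obtain ⟨h, hhS, hhA, hh⟩ := hg₀.exists_extension_finset hS hg₀S T
    have hT : ∀ p ∈ u, p.1 ∈ A ∪ T ∧ p.2 ∈ A ∪ T := fun p hp =>
      ⟨Finset.mem_union_right _ (Finset.mem_union_left _ (Finset.mem_image_of_mem _ hp)),
        Finset.mem_union_right _ (Finset.mem_union_right _ (Finset.mem_image_of_mem _ hp))⟩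
    refine ⟨h, fun x _ => hhS x, mem_iInter₂.2 fun p hp => ⟨fun hp₁ => ?_, ?_⟩⟩
    · rw [hhA (mem_filter.2 ⟨Finset.mem_union_left _ (Finset.mem_image_of_mem _ hp), hp₁⟩),
        hg₀f hp₁]
    · simpa using hh.dist_le_mul p.1 (hT p hp).1 p.2 (hT p hp).2
  have hg' : ∀ p, g ∈ t p := mem_iInter.1 hg
  exact ⟨g, LipschitzWith.mk_one fun x y => (hg' (x, y)).2, fun x => hgS x (mem_univ x),
    fun x hx => ((hg' (x, x)).1 hx).symm⟩

theorem exists_lipschitzWith_one_apply_eq_of_dist_le {v : ι → F} {w : ι → E} {S : Set E}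
    (hS : Convex ℝ S) (hSc : IsCompact S) (hSne : S.Nonempty) (hwS : ∀ i, w i ∈ S)
    (hvw : ∀ i j, dist (w i) (w j) ≤ dist (v i) (v j)) :
    ∃ f : F → E, LipschitzWith 1 f ∧ (∀ x, f x ∈ S) ∧ ∀ i, f (v i) = w i := by
  have hvw' : w.FactorsThrough v := fun i j h => dist_le_zero.1 (by simpa [h] using hvw i j)
  have hg : ∀ i, Function.extend v w 0 (v i) = w i := hvw'.extend_apply 0
  have hg_lip : LipschitzOnWith 1 (Function.extend v w 0) (range v) := by
    refine LipschitzOnWith.mk_one ?_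
    rintro _ ⟨i, rfl⟩ _ ⟨j, rfl⟩
    simpa only [hg] using hvw i j
  obtain ⟨f, hf, hfS, hfg⟩ := hg_lip.extend_of_convex_of_isCompact
    (by rintro _ ⟨i, rfl⟩; exact (hg i).symm ▸ hwS i) hS hSc hSne
  exact ⟨f, hf, hfS, fun i => (hfg (mem_range_self i)).symm.trans (hg i)⟩

end Kirszbraun

/-- The triangle case of Theorem 1.1 (= Theorem 3.21) of the paper: if the mutual
distances of `x₁', x₂', x₃'` do not exceed those of `x₁, x₂, x₃`, there is a 1-Lipschitz
map from the filled triangle `Δ = Δ(x₁,x₂,x₃)` to `Δ' = Δ(x₁',x₂',x₃')` sending each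
vertex to the corresponding vertex. -/
theorem one_lipschitz_map_between_triangles
    (x₁ x₂ x₃ x₁' x₂' x₃' : EuclideanSpace ℝ (Fin 2))
    (h12 : ‖x₁' - x₂'‖ ≤ ‖x₁ - x₂‖)
    (h13 : ‖x₁' - x₃'‖ ≤ ‖x₁ - x₃‖)
    (h23 : ‖x₂' - x₃'‖ ≤ ‖x₂ - x₃‖) :
    ∃ f : EuclideanSpace ℝ (Fin 2) → EuclideanSpace ℝ (Fin 2),
      (∀ x ∈ convexHull ℝ ({x₁, x₂, x₃} : Set (EuclideanSpace ℝ (Fin 2))),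
        ∀ y ∈ convexHull ℝ ({x₁, x₂, x₃} : Set (EuclideanSpace ℝ (Fin 2))),
          ‖f x - f y‖ ≤ ‖x - y‖) ∧
      (∀ x ∈ convexHull ℝ ({x₁, x₂, x₃} : Set (EuclideanSpace ℝ (Fin 2))),
        f x ∈ convexHull ℝ ({x₁', x₂', x₃'} : Set (EuclideanSpace ℝ (Fin 2)))) ∧
      f x₁ = x₁' ∧ f x₂ = x₂' ∧ f x₃ = x₃' := by
  set Δ' := convexHull ℝ ({x₁', x₂', x₃'} : Set (EuclideanSpace ℝ (Fin 2)))
  have hvertices : ∀ i, ![x₁', x₂', x₃'] i ∈ Δ' := fun i =>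
    subset_convexHull ℝ _ (by fin_cases i <;> simp)
  have hsides : ∀ i j, dist (![x₁', x₂', x₃'] i) (![x₁', x₂', x₃'] j) ≤
      dist (![x₁, x₂, x₃] i) (![x₁, x₂, x₃] j) := by
    intro i j
    fin_cases i <;> fin_cases j <;> simp [dist_eq_norm, norm_sub_rev, *]
  obtain ⟨f, hf, hfΔ', hfv⟩ := exists_lipschitzWith_one_apply_eq_of_dist_le
    (convex_convexHull ℝ _) ((toFinite _).isCompact_convexHull ℝ) ⟨_, hvertices 0⟩ hvertices hsides
  exact ⟨f, fun x _ y _ => by simpa using hf.norm_sub_le x y, fun x _ => hfΔ' x,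
    hfv 0, hfv 1, hfv 2⟩
end
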